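/- Uniform bound on cross-correlation coefficients away from resonance: if p ≠ 3(j−1) and j ≠ 3(p−1), then |C_{jp}^k| ≤ 2^{j+p+1} √((2j+1)(2p+1)) · ((4j)^{j+1} − (3+j+p)^{j+1}) · ((4p)^{p+1} − (3+j+p)^{p+1}) / ( (3(j−1)−p)(3(p−1)−j)(3+j+p)^{j+p} ) for all k ∈ ℕ₀; in particular the bound is uniform in k. -/

import Mathlib

/-!
The normalized coefficients obey `|B̃_m^j| ≤ 2^j √(2j+1)`: by strong induction on `j` through the
recurrence, each square-root coefficient times the inductive bound for `j - 1` or `j` is at most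
`√(2j+3)`, the powers `((j-1)/(j+1))^m`, `(j/(j+1))^m` are at most `1`, and `2^(j-1) + 2^j ≤ 2^(j+1)`.
With `c = 3 + j + p ≤ N + 1` for `N = k + 2 + j + p` one has `N! / (N+m+q)! ≤ c^{-(m+q)}`, so the
double sum defining `C_{jp}^k` is bounded, uniformly in `k`, by the product of the finite geometric
series in `4j/c` and `4p/c`; their closed forms have denominators `4j - c = 3(j-1) - p` and
`4p - c = 3(p-1) - j`, nonzero away from resonance.
-/

open Finset

/-- The recurrence defining the normalized coefficients `B̃_m^j`
(indexing: `X j m` means `B̃_m^j`). -/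
def BtildeRec (X : ℕ → ℕ → ℝ) : Prop :=
  X 0 0 = 1 ∧ X 1 0 = Real.sqrt 3 ∧ X 1 1 = -(Real.sqrt 3 / 2) ∧
  ∀ j : ℕ, 1 ≤ j →
    (X (j+1) 0 = Real.sqrt ((2*(j:ℝ)+3)/(2*(j:ℝ)-1)) * X (j-1) 0) ∧
    (∀ m : ℕ, 1 ≤ m → m ≤ j - 1 →
      X (j+1) m
        = Real.sqrt ((2*(j:ℝ)+3)/(2*(j:ℝ)-1)) * (((j:ℝ)-1)/((j:ℝ)+1))^m * X (j-1) m
          - Real.sqrt ((2*(j:ℝ)+1)*(2*(j:ℝ)+3)/((2*(j:ℝ)+2)^2)) *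
              ((j:ℝ)/((j:ℝ)+1))^(m-1) * X j (m-1)) ∧
    (X (j+1) j
      = -(Real.sqrt ((2*(j:ℝ)+1)*(2*(j:ℝ)+3)/((2*(j:ℝ)+2)^2)) *
          ((j:ℝ)/((j:ℝ)+1))^(j-1) * X j (j-1))) ∧
    (X (j+1) (j+1)
      = -(Real.sqrt ((2*(j:ℝ)+1)*(2*(j:ℝ)+3)/((2*(j:ℝ)+2)^2)) *
          ((j:ℝ)/((j:ℝ)+1))^j * X j j))

/-- The cross-correlation coefficients `C_{jp}^k` expressed through the
normalized coefficients `B̃`. -/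
noncomputable def crossC (X : ℕ → ℕ → ℝ) (j p k : ℕ) : ℝ :=
  (-1:ℝ)^j * (1 + (-1:ℝ)^k) *
    ∑ m ∈ Finset.range (j+1), ∑ q ∈ Finset.range (p+1),
      (((k+2+j+p).factorial : ℝ) * (4*(j:ℝ))^m * (4*(p:ℝ))^q
          / ((k+2+j+p+m+q).factorial : ℝ)) * X j m * X p q

open scoped Nat

lemma Nat.factorial_mul_pow_le_factorial_add {N c : ℕ} (hc : c ≤ N + 1) (s : ℕ) :
    N ! * c ^ s ≤ (N + s)! :=
  (Nat.mul_le_mul_left _ (Nat.pow_le_pow_left hc s)).trans Nat.factorial_mul_pow_le_factorial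

lemma factorial_mul_pow_mul_pow_div_le {N c : ℕ} (hc₀ : 0 < c) (hc : c ≤ N + 1)
    {a b : ℝ} (ha : 0 ≤ a) (hb : 0 ≤ b) (m q : ℕ) :
    (N ! : ℝ) * a ^ m * b ^ q / (N + m + q)! ≤ (a / c) ^ m * (b / c) ^ q := by
  have hfact : (N ! : ℝ) * (c : ℝ) ^ (m + q) ≤ (N + m + q)! := by
    rw [add_assoc]; exact_mod_cast Nat.factorial_mul_pow_le_factorial_add hc (m + q)
  have hc' : (0 : ℝ) < c := by exact_mod_cast hc₀
  rw [div_le_iff₀ (by positivity), div_pow, div_pow]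
  calc (N ! : ℝ) * a ^ m * b ^ q
      = a ^ m / c ^ m * (b ^ q / c ^ q) * ((N ! : ℝ) * (c : ℝ) ^ (m + q)) := by
        field_simp; ring
    _ ≤ a ^ m / c ^ m * (b ^ q / c ^ q) * (N + m + q)! := by gcongr

lemma abs_sum_sum_le_sum_mul_sum {ι κ : Type*} (s : Finset ι) (t : Finset κ)
    {f : ι → κ → ℝ} {g : ι → ℝ} {h : κ → ℝ} (hf : ∀ m ∈ s, ∀ q ∈ t, |f m q| ≤ g m * h q) :
    |∑ m ∈ s, ∑ q ∈ t, f m q| ≤ (∑ m ∈ s, g m) * ∑ q ∈ t, h q := by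
  rw [sum_mul_sum]
  refine (abs_sum_le_sum_abs _ _).trans (sum_le_sum fun m hm => ?_)
  exact (abs_sum_le_sum_abs _ _).trans (sum_le_sum fun q hq => hf m hm q hq)

lemma geom_sum_div_mul {K : Type*} [Field K] (x : K) {c : K} (hc : c ≠ 0) (n : ℕ) :
    (∑ i ∈ range (n + 1), (x / c) ^ i) * (c ^ n * (x - c)) = x ^ (n + 1) - c ^ (n + 1) := by
  calc (∑ i ∈ range (n + 1), (x / c) ^ i) * (c ^ n * (x - c))
      = (∑ i ∈ range (n + 1), (x / c) ^ i) * (x / c - 1) * c ^ (n + 1) := by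
        field_simp; ring
    _ = x ^ (n + 1) - c ^ (n + 1) := by
        rw [geom_sum_mul, sub_mul, div_pow, div_mul_cancel₀ _ (pow_ne_zero _ hc), one_mul]

lemma abs_sqrt_mul_pow_mul_le {v u w r y B : ℝ} (hu : 0 ≤ u) (hvu : v * u ≤ w)
    (hr₀ : 0 ≤ r) (hr₁ : r ≤ 1) (hB : 0 ≤ B) (hy : |y| ≤ B * √u) (s : ℕ) :
    |√v * r ^ s * y| ≤ B * √w := by
  rw [abs_mul, abs_mul, abs_of_nonneg (Real.sqrt_nonneg v), abs_of_nonneg (pow_nonneg hr₀ s)]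
  calc √v * r ^ s * |y| ≤ √v * 1 * (B * √u) := by
        gcongr
        exact pow_le_one₀ hr₀ hr₁
    _ = B * √(v * u) := by rw [Real.sqrt_mul' v hu]; ring
    _ ≤ B * √w := by gcongr

lemma BtildeRec.abs_le_succ_succ {X : ℕ → ℕ → ℝ} (hX : BtildeRec X) (n : ℕ)
    (ih₀ : ∀ s ≤ n, |X n s| ≤ 2 ^ n * √(2 * (n : ℝ) + 1))
    (ih₁ : ∀ s ≤ n + 1, |X (n + 1) s| ≤ 2 ^ (n + 1) * √(2 * ((n + 1 : ℕ) : ℝ) + 1)) :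
    ∀ m ≤ n + 2, |X (n + 2) m| ≤ 2 ^ (n + 2) * √(2 * ((n + 2 : ℕ) : ℝ) + 1) := by
  obtain ⟨hA, hB, hC, hD⟩ := hX.2.2.2 (n + 1) (by omega)
  simp only [Nat.add_sub_cancel] at hA hB hC hD
  set a : ℝ := ((n + 1 : ℕ) : ℝ) with ha
  have ha₁ : 1 ≤ a := by rw [ha]; exact_mod_cast Nat.le_add_left 1 n
  have e₀ : 2 * (n : ℝ) + 1 = 2 * a - 1 := by rw [ha]; push_cast; ring
  have e₂ : 2 * ((n + 2 : ℕ) : ℝ) + 1 = 2 * a + 3 := by rw [ha]; push_cast; ring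
  rw [e₀] at ih₀
  rw [e₂]
  have term₀ : ∀ s ≤ n, |√((2*a+3)/(2*a-1)) * ((a-1)/(a+1)) ^ s * X n s|
      ≤ 2 ^ n * √(2 * a + 3) := fun s hs =>
    abs_sqrt_mul_pow_mul_le (by linarith) (div_mul_cancel₀ _ (by linarith)).le
      (div_nonneg (by linarith) (by linarith)) ((div_le_one (by linarith)).2 (by linarith))
      (by positivity) (ih₀ s hs) s
  have term₁ : ∀ s ≤ n + 1, |√((2*a+1)*(2*a+3)/((2*a+2)^2)) * (a/(a+1)) ^ s * X (n+1) s|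
      ≤ 2 ^ (n + 1) * √(2 * a + 3) := fun s hs =>
    abs_sqrt_mul_pow_mul_le (by linarith)
      (by rw [div_mul_eq_mul_div, div_le_iff₀ (by positivity)]; nlinarith)
      (by positivity) ((div_le_one (by linarith)).2 (by linarith)) (by positivity) (ih₁ s hs) s
  have h₀ : (2 : ℝ) ^ n ≤ 2 ^ (n + 2) := pow_le_pow_right₀ one_le_two (by omega)
  have h₁ : (2 : ℝ) ^ (n + 1) ≤ 2 ^ (n + 2) := pow_le_pow_right₀ one_le_two (by omega)
  intro m hm
  obtain rfl | ⟨hm₁, hm₂⟩ | rfl | rfl : m = 0 ∨ (1 ≤ m ∧ m ≤ n) ∨ m = n + 1 ∨ m = n + 2 := by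
    omega
  · have := term₀ 0 n.zero_le
    rw [pow_zero, mul_one] at this
    rw [hA]; exact this.trans (by gcongr)
  · rw [hB m hm₁ (by omega)]
    calc _ ≤ 2 ^ n * √(2 * a + 3) + 2 ^ (n + 1) * √(2 * a + 3) :=
          (abs_sub _ _).trans (add_le_add (term₀ m hm₂) (term₁ (m - 1) (by omega)))
      _ ≤ 2 ^ (n + 2) * √(2 * a + 3) := by
          rw [← add_mul]; gcongr; rw [pow_succ, pow_succ, pow_succ]
          linarith [pow_pos (two_pos : (0 : ℝ) < 2) n]
  · rw [hC, abs_neg]; exact (term₁ n (by omega)).trans (by gcongr)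
  · rw [hD, abs_neg]; exact (term₁ (n + 1) le_rfl).trans (by gcongr)

lemma BtildeRec.abs_le {X : ℕ → ℕ → ℝ} (hX : BtildeRec X) :
    ∀ j, ∀ m ≤ j, |X j m| ≤ 2 ^ j * √(2 * (j : ℝ) + 1) := by
  intro j
  induction j using Nat.strong_induction_on with
  | _ j ih =>
  match j with
  | 0 =>
    intro m hm
    obtain rfl : m = 0 := by omega
    norm_num [hX.1]
  | 1 =>
    intro m hm
    have h3 : (0 : ℝ) ≤ √3 := Real.sqrt_nonneg 3
    interval_cases m
    · norm_num [hX.2.1, abs_of_nonneg h3]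
    · rw [hX.2.2.1, abs_neg, abs_of_nonneg (by positivity)]; norm_num; linarith
  | n + 2 => exact hX.abs_le_succ_succ n (ih n (by omega)) (ih (n + 1) (by omega))

lemma abs_crossC_le {X : ℕ → ℕ → ℝ} (hX : BtildeRec X) (j p k : ℕ) :
    |crossC X j p k|
      ≤ 2 * ((∑ m ∈ range (j + 1), (4 * (j : ℝ) / (3 + j + p)) ^ m * (2 ^ j * √(2 * (j : ℝ) + 1)))
        * ∑ q ∈ range (p + 1), (4 * (p : ℝ) / (3 + j + p)) ^ q * (2 ^ p * √(2 * (p : ℝ) + 1))) := by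
  have hterm : ∀ m ∈ range (j + 1), ∀ q ∈ range (p + 1),
      |((k+2+j+p)! : ℝ) * (4 * (j : ℝ)) ^ m * (4 * (p : ℝ)) ^ q / (k+2+j+p+m+q)! * X j m * X p q|
        ≤ (4 * (j : ℝ) / (3 + j + p)) ^ m * (2 ^ j * √(2 * (j : ℝ) + 1))
          * ((4 * (p : ℝ) / (3 + j + p)) ^ q * (2 ^ p * √(2 * (p : ℝ) + 1))) := by
    intro m hm q hq
    have hcoef := factorial_mul_pow_mul_pow_div_le (N := k + 2 + j + p) (c := 3 + j + p)
      (by omega) (by omega) (by positivity : 0 ≤ 4 * (j : ℝ)) (by positivity : 0 ≤ 4 * (p : ℝ)) m q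
    push_cast at hcoef
    have hXj := hX.abs_le j m (by simpa [Nat.lt_succ_iff] using hm)
    have hXp := hX.abs_le p q (by simpa [Nat.lt_succ_iff] using hq)
    rw [abs_mul, abs_mul, abs_of_nonneg (by positivity)]
    calc _ ≤ (4 * (j : ℝ) / (3 + j + p)) ^ m * (4 * (p : ℝ) / (3 + j + p)) ^ q
            * (2 ^ j * √(2 * (j : ℝ) + 1)) * (2 ^ p * √(2 * (p : ℝ) + 1)) := by
          gcongr
      _ = _ := by ring
  have hsign : |(-1 : ℝ) ^ j * (1 + (-1) ^ k)| ≤ 2 := by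
    rw [abs_mul, abs_pow, abs_neg, abs_one, one_pow, one_mul]
    exact (abs_add_le _ _).trans (by simp [one_add_one_eq_two])
  unfold crossC
  rw [abs_mul]
  exact mul_le_mul hsign (abs_sum_sum_le_sum_mul_sum _ _ hterm) (abs_nonneg _) zero_le_two

theorem crossC_uniform_bound (X : ℕ → ℕ → ℝ) (hX : BtildeRec X) (j p : ℕ)
    (hp : (p:ℝ) ≠ 3*((j:ℝ)-1)) (hj : (j:ℝ) ≠ 3*((p:ℝ)-1)) :
    ∀ k : ℕ,
      |crossC X j p k|
        ≤ 2^(j+p+1) * Real.sqrt ((2*(j:ℝ)+1)*(2*(p:ℝ)+1)) *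
            (((4*(j:ℝ))^(j+1) - (3+(j:ℝ)+(p:ℝ))^(j+1)) *
              ((4*(p:ℝ))^(p+1) - (3+(j:ℝ)+(p:ℝ))^(p+1)))
          / ((3*((j:ℝ)-1) - p) * (3*((p:ℝ)-1) - j) * (3+(j:ℝ)+(p:ℝ))^(j+p)) := by
  intro k
  have hc : (3 + j + p : ℝ) ≠ 0 := by positivity
  have hgeom_j := geom_sum_div_mul (4 * (j : ℝ)) hc j
  have hgeom_p := geom_sum_div_mul (4 * (p : ℝ)) hc p
  rw [show 4 * (j : ℝ) - (3 + j + p) = 3 * ((j : ℝ) - 1) - p by ring] at hgeom_j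
  rw [show 4 * (p : ℝ) - (3 + j + p) = 3 * ((p : ℝ) - 1) - j by ring] at hgeom_p
  have hd_j : 3 * ((j : ℝ) - 1) - p ≠ 0 := sub_ne_zero.2 hp.symm
  have hd_p : 3 * ((p : ℝ) - 1) - j ≠ 0 := sub_ne_zero.2 hj.symm
  rw [← hgeom_j, ← hgeom_p, Real.sqrt_mul (by positivity)]
  refine (abs_crossC_le hX j p k).trans (le_of_eq ?_)
  rw [← sum_mul, ← sum_mul]
  field_simp
  ring
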